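/- arXiv:2309.16594 — 5 statements merged into one kernel-verified Lean document; each statement's English description precedes it below -/
import Mathlib

section
/- Let G = (V,E) be a directed graph with |V| = n ≥ 1 and let h, τ be integers with 1 ≤ h ≤ n and 1 ≤ τ ≤ n. Then there exist a set C ⊆ V with |C| ≤ 2n/τ and a family Π containing, for some ordered pairs (s,t) ∈ V × V, at most one path π_{s,t} from s to t in G, such that: (a) for all s,t ∈ V with δ_{G−C}^h(s,t) < ∞, the path π_{s,t} is defined and has length at most δ_{G−C}^h(s,t); and (b) every vertex u ∈ V lies on at most 2nhτ of the paths of Π. -/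
open scoped Classical

namespace Paper

variable {V : Type*}

/-- `p` (restricted to indices `0,…,k`) is a walk of length `k` w.r.t. the edge relation `E`. -/
def IsWalk (E : V → V → Prop) (k : ℕ) (p : ℕ → V) : Prop :=
  ∀ i, i < k → E (p i) (p (i + 1))

/-- The `h`-bounded distance `δ_G^h(s,t)`: the minimum number of edges of a walk from `s`
to `t` with at most `h` edges (`⊤` if none exists). -/
noncomputable def bdist (E : V → V → Prop) (h : ℕ) (s t : V) : ℕ∞ :=
  ⨅ (k : ℕ) (_ : k ≤ h ∧ ∃ p : ℕ → V, p 0 = s ∧ p k = t ∧ IsWalk E k p), (k : ℕ∞)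

/-- The graph `G − D`: all edges incident to `D` are removed. -/
def delV (E : V → V → Prop) (D : Set V) : V → V → Prop :=
  fun u v => E u v ∧ u ∉ D ∧ v ∉ D

/-- A (simple) path in the graph with edge relation `E`: a walk with pairwise distinct
vertices; `len` is its number of edges. -/
structure Path (E : V → V → Prop) where
  len : ℕ
  vtx : ℕ → V
  isWalk : IsWalk E len vtx
  inj : ∀ i ≤ len, ∀ j ≤ len, vtx i = vtx j → i = j

/-!
Process the ordered pairs one at a time. When `(s,t)` is processed, call a vertex congested
if it already lies on at least `T = nhτ` chosen paths, and route `(s,t)` along a shortest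
`h`-bounded path of `G` minus the current congested set. Congested sets only grow, so each chosen
path stays short with respect to the final congested set `C`. A path with an edge avoids the
vertices that were congested when it was chosen, so every vertex lies on at most `T + 1` paths
(the extra one being the trivial path from it to itself). Each path has at most `h + 1` vertices,
so double counting gives `|C| T ≤ n² (h + 1) ≤ 2n²h`, i.e. `|C| ≤ 2n/τ`.
-/

open Finset

lemma IsWalk.shortcut {E : V → V → Prop} {k i j : ℕ} {p : ℕ → V} (hp : IsWalk E k p)
    (hij : i < j) (hjk : j ≤ k) (hpij : p i = p j) :
    IsWalk E (k - (j - i)) fun m => p (if m ≤ i then m else m + (j - i)) := by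
  intro m hm
  dsimp only
  split_ifs
  · exact hp m (by omega)
  · obtain rfl : m = i := by omega
    rw [hpij, show m + 1 + (j - m) = j + 1 by omega]
    exact hp j (by omega)
  · omega
  · rw [show m + 1 + (j - i) = m + (j - i) + 1 by omega]
    exact hp _ (by omega)

/-- A walk of minimum length realising `bdist` has no repeated vertex, since a repetition
could be shortcut. -/
lemma exists_path_of_bdist_ne_top {E : V → V → Prop} {h : ℕ} {s t : V}
    (hne : bdist E h s t ≠ ⊤) :
    ∃ p : Path E, p.vtx 0 = s ∧ p.vtx p.len = t ∧ p.len ≤ h ∧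
      (p.len : ℕ∞) = bdist E h s t := by
  set S : Set ℕ := {k | k ≤ h ∧ ∃ p : ℕ → V, p 0 = s ∧ p k = t ∧ IsWalk E k p}
  have hS : S.Nonempty := by
    by_contra hS
    apply hne
    rw [show bdist E h s t = ⨅ k ∈ S, (k : ℕ∞) from rfl,
      Set.not_nonempty_iff_eq_empty.1 hS, iInf_emptyset]
  obtain ⟨hkh, p, hp0, hpk, hp⟩ := Nat.sInf_mem hS
  refine ⟨⟨sInf S, p, hp, fun i hi j hj hij => ?_⟩, hp0, hpk, hkh, ENat.natCast_sInf hS⟩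
  by_contra hne
  wlog hlt : i < j generalizing i j
  · exact this j hj i hi hij.symm (Ne.symm hne) (by omega)
  set k' := sInf S - (j - i)
  have hend : p (if k' ≤ i then k' else k' + (j - i)) = t := by
    split_ifs with hle
    · rw [show k' = i by omega, hij, show j = sInf S by omega, hpk]
    · rw [show k' + (j - i) = sInf S by omega, hpk]
  have := Nat.sInf_le (s := S) (m := k') ⟨by omega, fun m => p (if m ≤ i then m else m + (j - i)),
    by simpa using hp0, hend, hp.shortcut hlt hj hij⟩
  omega

def Path.mono {E₁ E₂ : V → V → Prop} (hle : ∀ u v, E₁ u v → E₂ u v) (p : Path E₁) : Path E₂ :=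
  ⟨p.len, p.vtx, fun i hi => hle _ _ (p.isWalk i hi), p.inj⟩

lemma bdist_anti {E₁ E₂ : V → V → Prop} (hle : ∀ u v, E₁ u v → E₂ u v) (h : ℕ) (s t : V) :
    bdist E₂ h s t ≤ bdist E₁ h s t :=
  le_iInf₂ fun k ⟨hkh, p, hp0, hpk, hp⟩ =>
    iInf₂_le k ⟨hkh, p, hp0, hpk, fun i hi => hle _ _ (hp i hi)⟩

lemma bdist_delV_mono {E : V → V → Prop} {D D' : Set V} (hD : D ⊆ D') (h : ℕ) (s t : V) :
    bdist (delV E D) h s t ≤ bdist (delV E D') h s t :=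
  bdist_anti (fun _ _ ⟨huv, hu, hv⟩ => ⟨huv, fun h => hu (hD h), fun h => hv (hD h)⟩) h s t

lemma IsWalk.notMem_of_delV {E : V → V → Prop} {D : Set V} {k : ℕ} {p : ℕ → V}
    (hp : IsWalk (delV E D) k p) (hk : 0 < k) {i : ℕ} (hi : i ≤ k) : p i ∉ D := by
  rcases hi.lt_or_eq with hi | rfl
  · exact (hp i hi).2.1
  · simpa [Nat.sub_add_cancel hk] using (hp (i - 1) (by omega)).2.2

section Routing

variable [Fintype V] {E : V → V → Prop}

noncomputable def routedThrough (π : V × V → Option (Path E)) (u : V) : Finset (V × V) :=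
  {q | ∃ p, π q = some p ∧ ∃ i ≤ p.len, p.vtx i = u}

def congested (T : ℕ) (π : V × V → Option (Path E)) : Set V :=
  {u | T ≤ #(routedThrough π u)}

lemma routedThrough_mono {π π' : V × V → Option (Path E)}
    (hext : ∀ q p, π q = some p → π' q = some p) (u : V) :
    routedThrough π u ⊆ routedThrough π' u := by
  simp only [routedThrough, subset_iff, mem_filter_univ]
  exact fun q ⟨p, hp, hu⟩ => ⟨p, hext q p hp, hu⟩

lemma congested_mono {π π' : V × V → Option (Path E)} (T : ℕ)
    (hext : ∀ q p, π q = some p → π' q = some p) :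
    congested T π ⊆ congested T π' :=
  fun u hu => hu.trans (card_le_card (routedThrough_mono hext u))

lemma routedThrough_update_subset (π : V × V → Option (Path E)) (q : V × V)
    (o : Option (Path E)) (u : V) :
    routedThrough (Function.update π q o) u ⊆ insert q (routedThrough π u) := by
  intro q' hq'
  by_cases hq : q' = q
  · exact hq ▸ mem_insert_self _ _
  · simp only [routedThrough, mem_filter_univ, Function.update_of_ne hq] at hq'
    exact mem_insert_of_mem ((mem_filter_univ _).2 hq')

/-- Invariant of the greedy routing of the pairs in `S` with congestion threshold `T`. The trivial
path from `u` to itself is not counted at `u`: it passes through `u` even when `u` is congested. -/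
structure IsGreedyRouting (E : V → V → Prop) (h T : ℕ) (S : Finset (V × V))
    (π : V × V → Option (Path E)) : Prop where
  eq_none : ∀ q ∉ S, π q = none
  endpoints : ∀ q p, π q = some p → p.vtx 0 = q.1 ∧ p.vtx p.len = q.2 ∧ p.len ≤ h
  shortest : ∀ q ∈ S, bdist (delV E (congested T π)) h q.1 q.2 ≠ ⊤ →
    ∃ p, π q = some p ∧ (p.len : ℕ∞) ≤ bdist (delV E (congested T π)) h q.1 q.2
  card_erase_le : ∀ u, #((routedThrough π u).erase (u, u)) ≤ T

lemma card_routedThrough_update_erase_le {π : V × V → Option (Path E)} {T : ℕ} {q : V × V}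
    {u : V} (hu : #((routedThrough π u).erase (u, u)) ≤ T)
    (p : Path (delV E (congested T π))) (hp0 : p.vtx 0 = q.1) (hpl : p.vtx p.len = q.2) :
    #((routedThrough (Function.update π q (some (p.mono fun _ _ h => h.1))) u).erase (u, u))
      ≤ T := by
  by_cases hC : u ∈ congested T π
  · refine (card_le_card fun q' hq' => ?_).trans hu
    obtain ⟨hq'u, hq'⟩ := mem_erase.1 hq'
    rcases eq_or_ne q' q with rfl | hne
    · exfalso
      simp only [routedThrough, mem_filter_univ, Function.update_self, Option.some_inj,
        exists_eq_left'] at hq'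
      obtain ⟨i, hi, rfl⟩ := hq'
      rcases Nat.eq_zero_or_pos p.len with hl | hl
      · obtain rfl : i = 0 := by change i ≤ p.len at hi; omega
        exact hq'u (Prod.ext hp0.symm (by rw [← hpl, hl]; rfl))
      · exact p.isWalk.notMem_of_delV hl hi hC
    · simp only [routedThrough, mem_filter_univ, Function.update_of_ne hne] at hq'
      exact mem_erase.2 ⟨hq'u, (mem_filter_univ _).2 hq'⟩
  · calc _ ≤ #(routedThrough (Function.update π q _) u) := card_erase_le
      _ ≤ #(insert q (routedThrough π u)) := card_le_card (routedThrough_update_subset _ _ _ _)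
      _ ≤ #(routedThrough π u) + 1 := card_insert_le _ _
      _ ≤ T := by simpa [congested] using hC

lemma IsGreedyRouting.insert {h T : ℕ} {S : Finset (V × V)} {π : V × V → Option (Path E)}
    (hπ : IsGreedyRouting E h T S π) {q : V × V} (hq : q ∉ S) :
    ∃ π', IsGreedyRouting E h T (insert q S) π' := by
  by_cases hfin : bdist (delV E (congested T π)) h q.1 q.2 = ⊤
  · refine ⟨π, fun q' hq' => hπ.eq_none q' (by simp_all), hπ.endpoints, fun q' hq' hne => ?_,
      hπ.card_erase_le⟩
    rcases mem_insert.1 hq' with rfl | hq'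
    · exact absurd hfin hne
    · exact hπ.shortest q' hq' hne
  obtain ⟨p, hp0, hpl, hph, hplen⟩ := exists_path_of_bdist_ne_top hfin
  set π' := Function.update π q (some (p.mono fun _ _ h => h.1))
  have hext : ∀ q' p', π q' = some p' → π' q' = some p' := fun q' p' hp' =>
    hp' ▸ Function.update_of_ne (by rintro rfl; simp [hπ.eq_none _ hq] at hp') _ _
  have hmono := bdist_delV_mono (E := E) (congested_mono T hext) h
  refine ⟨π', fun q' hq' => ?_, fun q' p' hp' => ?_, fun q' hq' hne => ?_,
    fun u => card_routedThrough_update_erase_le (hπ.card_erase_le u) p hp0 hpl⟩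
  · exact (Function.update_of_ne (by rintro rfl; simp at hq') _ _).trans
      (hπ.eq_none q' (by simp_all))
  · rcases eq_or_ne q' q with rfl | hne
    · simp only [π', Function.update_self, Option.some_inj] at hp'
      exact hp' ▸ ⟨hp0, hpl, hph⟩
    · exact hπ.endpoints q' p' ((Function.update_of_ne hne _ _).symm.trans hp')
  · rcases eq_or_ne q' q with rfl | hne'
    · exact ⟨_, Function.update_self .., hplen.le.trans (hmono _ _)⟩
    · obtain ⟨p', hp', hle⟩ := hπ.shortest q' (by simpa [hne'] using hq')
        fun htop => hne (top_le_iff.1 (htop ▸ hmono q'.1 q'.2))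
      exact ⟨p', hext q' p' hp', hle.trans (hmono _ _)⟩

lemma exists_isGreedyRouting (E : V → V → Prop) (h T : ℕ) (S : Finset (V × V)) :
    ∃ π, IsGreedyRouting E h T S π := by
  induction S using Finset.induction_on with
  | empty => exact ⟨fun _ => none, fun _ _ => rfl, by simp, by simp, by simp [routedThrough]⟩
  | insert q S hq ih => exact ih.elim fun π hπ => hπ.insert hq

lemma IsGreedyRouting.card_routedThrough_le {h T : ℕ} {S : Finset (V × V)}
    {π : V × V → Option (Path E)} (hπ : IsGreedyRouting E h T S π) (u : V) :
    #(routedThrough π u) ≤ T + 1 := by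
  have := (hπ.card_erase_le u).trans' (pred_card_le_card_erase (a := (u, u)))
  omega

lemma sum_card_routedThrough_le {h : ℕ} {π : V × V → Option (Path E)}
    (hlen : ∀ q p, π q = some p → p.len ≤ h) :
    ∑ u, #(routedThrough π u) ≤ Fintype.card V ^ 2 * (h + 1) := by
  have hvisited (q : V × V) : #{u | ∃ p, π q = some p ∧ ∃ i ≤ p.len, p.vtx i = u} ≤ h + 1 := by
    rcases hq : π q with _ | p
    · simp
    · calc _ ≤ #((range (p.len + 1)).image p.vtx) := card_le_card fun u hu => by
            obtain ⟨i, hi, rfl⟩ := by simpa using hu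
            exact mem_image_of_mem _ (mem_range.2 (by omega))
        _ ≤ p.len + 1 := card_image_le.trans (card_range _).le
        _ ≤ h + 1 := by have := hlen q p hq; omega
  calc ∑ u, #(routedThrough π u)
      = ∑ q, #{u | ∃ p, π q = some p ∧ ∃ i ≤ p.len, p.vtx i = u} := by
        simp only [routedThrough, card_filter]
        exact sum_comm
    _ ≤ ∑ _q : V × V, (h + 1) := sum_le_sum fun q _ => hvisited q
    _ = Fintype.card V ^ 2 * (h + 1) := by simp [sq]

lemma ncard_congested_mul_le (T : ℕ) (π : V × V → Option (Path E)) :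
    (congested T π).ncard * T ≤ ∑ u, #(routedThrough π u) := by
  have hC : congested T π = ↑({u | T ≤ #(routedThrough π u)} : Finset V) := by
    ext u; simp [congested]
  rw [hC, Set.ncard_coe_finset, ← smul_eq_mul, ← sum_const]
  exact (sum_le_sum fun u hu => (mem_filter.1 hu).2).trans (sum_le_sum_of_subset (subset_univ _))

end Routing

theorem collection_congested_general {V : Type*} [Fintype V]
    (E : V → V → Prop) (n h τ : ℕ)
    (hn : Fintype.card V = n) (hn1 : 1 ≤ n)
    (hh1 : 1 ≤ h) (hτ1 : 1 ≤ τ) :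
    ∃ (C : Set V) (π : V → V → Option (Path E)),
      ((C.ncard : ℝ) ≤ 2 * (n : ℝ) / (τ : ℝ)) ∧
      (∀ s t : V, ∀ p, π s t = some p → p.vtx 0 = s ∧ p.vtx p.len = t) ∧
      (∀ s t : V, bdist (delV E C) h s t ≠ ⊤ →
        ∃ p, π s t = some p ∧ (p.len : ℕ∞) ≤ bdist (delV E C) h s t) ∧
      (∀ u : V,
        ({q : V × V | ∃ p, π q.1 q.2 = some p ∧ ∃ i ≤ p.len, p.vtx i = u}).ncard
          ≤ 2 * n * h * τ) := by
  obtain ⟨π, hπ⟩ := exists_isGreedyRouting E h (n * h * τ) univ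
  refine ⟨congested (n * h * τ) π, fun s t => π (s, t), ?_,
    fun s t p hp => (hπ.endpoints _ p hp).imp_right And.left,
    fun s t => hπ.shortest (s, t) (mem_univ _), fun u => ?_⟩
  · have hcount := (ncard_congested_mul_le (n * h * τ) π).trans
      (sum_card_routedThrough_le fun q p hp => (hπ.endpoints q p hp).2.2)
    rw [hn] at hcount
    have hnh : 0 < n * h := by positivity
    have hcard : (congested (n * h * τ) π).ncard * τ ≤ 2 * n :=
      Nat.le_of_mul_le_mul_right (c := n * h) (by nlinarith) hnh
    rw [le_div_iff₀ (by exact_mod_cast hτ1)]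
    exact_mod_cast hcard
  · have hroute : {q : V × V | ∃ p, π (q.1, q.2) = some p ∧ ∃ i ≤ p.len, p.vtx i = u}
        = ↑(routedThrough π u) := by
      ext q; simp [routedThrough]
    rw [hroute, Set.ncard_coe_finset]
    have : 1 ≤ n * h * τ := Nat.one_le_iff_ne_zero.2 (by positivity)
    linarith [hπ.card_routedThrough_le u]

/-- **Lemma 3.1 (combinatorial content).** For a digraph `G` on `n ≥ 1` vertices and
parameters `1 ≤ h ≤ n`, `1 ≤ τ ≤ n` there exist a congested set `C` with `|C| ≤ 2n/τ` and a
collection `Π` of paths of `G` (at most one path `π_{s,t}` per ordered pair `(s,t)`) such that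
(a) whenever `δ_{G−C}^h(s,t) < ∞`, the path `π_{s,t}` exists and `|π_{s,t}| ≤ δ_{G−C}^h(s,t)`,
and (b) every vertex lies on at most `2nhτ` paths of `Π`. -/
theorem collection_congested {V : Type*} [Fintype V]
    (E : V → V → Prop) (n h τ : ℕ)
    (hn : Fintype.card V = n) (hn1 : 1 ≤ n)
    (hh1 : 1 ≤ h) (hhn : h ≤ n) (hτ1 : 1 ≤ τ) (hτn : τ ≤ n) :
    ∃ (C : Set V) (π : V → V → Option (Path E)),
      ((C.ncard : ℝ) ≤ 2 * (n : ℝ) / (τ : ℝ)) ∧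
      (∀ s t : V, ∀ p, π s t = some p → p.vtx 0 = s ∧ p.vtx p.len = t) ∧
      (∀ s t : V, bdist (delV E C) h s t ≠ ⊤ →
        ∃ p, π s t = some p ∧ (p.len : ℕ∞) ≤ bdist (delV E C) h s t) ∧
      (∀ u : V,
        ({q : V × V | ∃ p, π q.1 q.2 = some p ∧ ∃ i ≤ p.len, p.vtx i = u}).ncard
          ≤ 2 * n * h * τ) :=
  collection_congested_general E n h τ hn hn1 hh1 hτ1

end Paper
end

section
/- Let G = (V,E) be a directed graph on vertex set V, let h ≥ 2 be an integer, let C, D, H ⊆ V, let s ∈ V, and let Y ⊆ V × V be a set of pairs with ((C ∪ D ∪ {s}) × V) ∪ (V × (C ∪ D)) ⊆ Y. Let Π be a family containing, for some pairs (u,v), a path π_{u,v} from u to v in G avoiding all vertices of D, such that for all u,v ∈ V with δ_{G−(C∪D)}^h(u,v) < ∞, either (u,v) ∈ Y or π_{u,v} is defined with |π_{u,v}| ≤ δ_{G−(C∪D)}^h(u,v); moreover, for every defined π_{u,v} with |π_{u,v}| ≥ ⌊h/2⌋, a vertex β(u,v) ∈ H lying on π_{u,v} is fixed. Define the weighted directed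 graph X on vertex set V with the following edges (parallel edges merged keeping the minimum weight): for every (u,v) ∈ Y with δ_G^h(u,v) < ∞, an edge (u,v) of weight δ_G^h(u,v); for every z ∈ H and v ∈ V, an edge (z,v) of weight min{ length of the subpath of π_{u,v} from z to v : u ∈ V, π_{u,v} defined, |π_{u,v}| ≥ ⌊h/2⌋, β(u,v) = z }, present whenever this set is nonempty; and for every u ∈ V and z ∈ H, an edge (u,z) of weight min{ length of the subpath of π_{u,v} from u to z : v ∈ V, π_{u,v} defined, |π_{u,v}| ≥ ⌊h/2⌋, β(u,v) = z }, present whenever this set is nonempty. Then for every t ∈ V, the shortest-path distance from s to t in the weighted graph X equals δ_G(s,t). -/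
/-!
Every edge of `X` is realised by a walk of `G` of at most its weight, so `δ_G ≤ δ_X`.
Conversely, induct on `δ_G(a, t)` over start vertices `a` that lie in `C ∪ D ∪ {s}` or are at
distance at least `h / 2` from `t`, following a shortest walk `p` from `a` to `t`. If `p` meets
`C ∪ D` within its first `j ≤ h` steps, a `Y`-edge jumps there. Otherwise `(a, p j) ∈ Y` (when `a`
is special), or the first `j` steps lie in `G − (C ∪ D)` and are covered by `Y` or by a path
`π a (p j)` of length `j ≥ h / 2`, which `X` shortcuts through its representative `β a (p j) ∈ H`.
The step length `j ≤ h` is chosen so that the rest of `p` is empty or again at least `h / 2`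
long, which keeps the induction going.
-/

open scoped Classical

namespace Paper

variable {V : Type*}

/-- The distance `δ_G(s,t)`: the minimum number of edges of a walk from `s` to `t`
(`⊤` if none exists). -/
noncomputable def gdist (E : V → V → Prop) (s t : V) : ℕ∞ :=
  ⨅ (k : ℕ) (_ : ∃ p : ℕ → V, p 0 = s ∧ p k = t ∧ IsWalk E k p), (k : ℕ∞)

/-- The shortest-path distance in a weighted digraph given by a weight function
`w : V → V → ℕ∞` (`⊤` meaning absence of an edge): the minimum total weight of a walk. -/
noncomputable def wdist (w : V → V → ℕ∞) (s t : V) : ℕ∞ :=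
  ⨅ (k : ℕ) (p : ℕ → V) (_ : p 0 = s ∧ p k = t), ∑ i ∈ Finset.range k, w (p i) (p (i + 1))

section Walks

variable {E : V → V → Prop} {k m : ℕ} {p q : ℕ → V}

lemma IsWalk.of_le (hp : IsWalk E k p) {j : ℕ} (hj : j ≤ k) : IsWalk E j p :=
  fun i hi => hp i (by omega)

lemma IsWalk.shift (hp : IsWalk E k p) (i : ℕ) : IsWalk E (k - i) (fun r => p (i + r)) :=
  fun r hr => by simpa only [Nat.add_assoc] using hp (i + r) (by omega)

lemma IsWalk.delV (hp : IsWalk E k p) {D : Set V} (hD : ∀ i ≤ k, p i ∉ D) :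
    IsWalk (delV E D) k p :=
  fun i hi => ⟨hp i hi, hD i hi.le, hD (i + 1) hi⟩

def walkAppend (p : ℕ → V) (k : ℕ) (q : ℕ → V) : ℕ → V :=
  fun i => if i ≤ k then p i else q (i - k)

lemma walkAppend_of_le {i : ℕ} (hi : i ≤ k) : walkAppend p k q i = p i := if_pos hi

lemma walkAppend_add (hpq : p k = q 0) (i : ℕ) : walkAppend p k q (k + i) = q i := by
  unfold walkAppend
  split_ifs with hi
  · obtain rfl : i = 0 := by omega
    simpa using hpq
  · rw [Nat.add_sub_cancel_left]

lemma sum_range_walkAppend {M : Type*} [AddCommMonoid M] (f : V → V → M) (hpq : p k = q 0) :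
    ∑ i ∈ Finset.range (k + m), f (walkAppend p k q i) (walkAppend p k q (i + 1)) =
      ∑ i ∈ Finset.range k, f (p i) (p (i + 1)) + ∑ i ∈ Finset.range m, f (q i) (q (i + 1)) := by
  rw [Finset.sum_range_add]
  congr 1
  · refine Finset.sum_congr rfl fun i hi => ?_
    rw [Finset.mem_range] at hi
    rw [walkAppend_of_le hi.le, walkAppend_of_le hi]
  · refine Finset.sum_congr rfl fun i _ => ?_
    rw [Nat.add_assoc, walkAppend_add hpq, walkAppend_add hpq]

lemma IsWalk.append (hp : IsWalk E k p) (hq : IsWalk E m q) (hpq : p k = q 0) :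
    IsWalk E (k + m) (walkAppend p k q) := by
  intro i hi
  rcases lt_or_ge i k with hik | hki
  · rw [walkAppend_of_le hik.le, walkAppend_of_le hik]
    exact hp i hik
  · obtain ⟨r, rfl⟩ := Nat.exists_eq_add_of_le hki
    rw [Nat.add_assoc, walkAppend_add hpq, walkAppend_add hpq]
    exact hq r (by omega)

end Walks

section Distances

variable {E : V → V → Prop} {a b c : V} {k : ℕ} {p : ℕ → V}

lemma gdist_le_of_walk (h0 : p 0 = a) (hk : p k = b) (hp : IsWalk E k p) :
    gdist E a b ≤ k :=
  iInf₂_le k ⟨p, h0, hk, hp⟩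

lemma bdist_le_of_walk {h : ℕ} (hkh : k ≤ h) (h0 : p 0 = a) (hk : p k = b) (hp : IsWalk E k p) :
    bdist E h a b ≤ k :=
  iInf₂_le k ⟨hkh, p, h0, hk, hp⟩

lemma gdist_le_bdist (h : ℕ) : gdist E a b ≤ bdist E h a b :=
  le_iInf₂ fun _ ⟨_, _, h0, hk, hp⟩ => gdist_le_of_walk h0 hk hp

lemma exists_walk_of_gdist_eq {n : ℕ} (hn : gdist E a b = n) :
    ∃ p : ℕ → V, p 0 = a ∧ p n = b ∧ IsWalk E n p := by
  rw [gdist, iInf_subtype', ENat.iInf_eq_natCast_iff] at hn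
  obtain ⟨⟨⟨k, hk⟩, hkn⟩, -⟩ := hn
  obtain rfl : k = n := by exact_mod_cast hkn
  exact hk

lemma gdist_triangle (a b c : V) : gdist E a c ≤ gdist E a b + gdist E b c :=
  ENat.le_iInf₂_add_iInf₂ fun k ⟨p, hp0, hpk, hp⟩ m ⟨q, hq0, hqm, hq⟩ => by
    rw [← Nat.cast_add]
    refine gdist_le_of_walk ?_ ?_ (hp.append hq (hpk.trans hq0.symm))
    · rw [walkAppend_of_le (Nat.zero_le k), hp0]
    · rw [walkAppend_add (hpk.trans hq0.symm), hqm]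

lemma gdist_prefix_suffix (hp : IsWalk E k p) (hk : gdist E (p 0) (p k) = k) {i : ℕ}
    (hi : i ≤ k) : gdist E (p 0) (p i) = i ∧ gdist E (p i) (p k) = (k - i : ℕ) := by
  have hpre : gdist E (p 0) (p i) ≤ i := gdist_le_of_walk rfl rfl (hp.of_le hi)
  have hsuf : gdist E (p i) (p k) ≤ (k - i : ℕ) :=
    gdist_le_of_walk rfl (by rw [Nat.add_sub_cancel' hi]) (hp.shift i)
  have htri := hk ▸ gdist_triangle (E := E) (p 0) (p i) (p k)
  lift gdist E (p 0) (p i) to ℕ using ne_top_of_le_ne_top (ENat.natCast_ne_top i) hpre with x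
  lift gdist E (p i) (p k) to ℕ using ne_top_of_le_ne_top (ENat.natCast_ne_top _) hsuf with y
  norm_cast at *
  omega

end Distances

section WeightedDistance

variable {w : V → V → ℕ∞} {a b c : V} {k : ℕ} {p : ℕ → V}

lemma wdist_le_of_walk (h0 : p 0 = a) (hk : p k = b) :
    wdist w a b ≤ ∑ i ∈ Finset.range k, w (p i) (p (i + 1)) :=
  iInf_le_of_le k (iInf_le_of_le p (iInf_le_of_le ⟨h0, hk⟩ le_rfl))

lemma wdist_self (w : V → V → ℕ∞) (a : V) : wdist w a a = 0 :=
  nonpos_iff_eq_zero.1 <| (wdist_le_of_walk (k := 0) (p := fun _ => a) rfl rfl).trans_eq (by simp)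

lemma wdist_le_weight (w : V → V → ℕ∞) (a b : V) : wdist w a b ≤ w a b :=
  (wdist_le_of_walk (k := 1) (p := fun i => if i = 0 then a else b) rfl rfl).trans_eq (by simp)

lemma wdist_triangle (w : V → V → ℕ∞) (a b c : V) : wdist w a c ≤ wdist w a b + wdist w b c := by
  refine ENat.le_iInf_add_iInf fun k m =>
    ENat.le_iInf₂_add_iInf₂ fun p ⟨hp0, hpk⟩ q ⟨hq0, hqm⟩ => ?_
  rw [← sum_range_walkAppend w (hpk.trans hq0.symm)]
  refine wdist_le_of_walk ?_ ?_
  · rw [walkAppend_of_le (Nat.zero_le k), hp0]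
  · rw [walkAppend_add (hpk.trans hq0.symm), hqm]

lemma gdist_le_wdist {E : V → V → Prop} (hw : ∀ a b, gdist E a b ≤ w a b) (a b : V) :
    gdist E a b ≤ wdist w a b := by
  refine le_iInf fun k => le_iInf fun p => le_iInf ?_
  rintro ⟨rfl, rfl⟩
  induction k with
  | zero => simpa using gdist_le_of_walk (E := E) (k := 0) (p := p) rfl rfl (by simp [IsWalk])
  | succ k ih =>
    rw [Finset.sum_range_succ]
    exact (gdist_triangle _ (p k) _).trans (add_le_add ih (hw _ _))

end WeightedDistance

section QueryGraph

variable {E : V → V → Prop} {h : ℕ} {Y : Set (V × V)} {H : Set V}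
  {π : V → V → Option (Path E)} {β : V → V → V}

noncomputable def weightFromHit (h : ℕ) (π : V → V → Option (Path E)) (β : V → V → V)
    (z b : V) : ℕ∞ :=
  ⨅ (u : V) (p : Path E) (_ : π u b = some p ∧ h / 2 ≤ p.len ∧ β u b = z)
    (i : ℕ) (_ : i ≤ p.len ∧ p.vtx i = z), ((p.len - i : ℕ) : ℕ∞)

noncomputable def weightToHit (h : ℕ) (π : V → V → Option (Path E)) (β : V → V → V)
    (a z : V) : ℕ∞ :=
  ⨅ (v : V) (p : Path E) (_ : π a v = some p ∧ h / 2 ≤ p.len ∧ β a v = z)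
    (i : ℕ) (_ : i ≤ p.len ∧ p.vtx i = z), ((i : ℕ) : ℕ∞)

noncomputable def queryWeight (E : V → V → Prop) (h : ℕ) (Y : Set (V × V)) (H : Set V)
    (π : V → V → Option (Path E)) (β : V → V → V) (a b : V) : ℕ∞ :=
  (if (a, b) ∈ Y then bdist E h a b else ⊤) ⊓
  (if a ∈ H then weightFromHit h π β a b else ⊤) ⊓
  (if b ∈ H then weightToHit h π β a b else ⊤)

lemma gdist_le_weightFromHit (hπ : ∀ u v p, π u v = some p → p.vtx 0 = u ∧ p.vtx p.len = v)
    (z b : V) : gdist E z b ≤ weightFromHit h π β z b :=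
  le_iInf fun u => le_iInf fun q => le_iInf fun ⟨hq, _⟩ => le_iInf fun i =>
    le_iInf fun ⟨hi, hqi⟩ => gdist_le_of_walk (p := fun r => q.vtx (i + r)) hqi
      (by rw [Nat.add_sub_cancel' hi, (hπ u b q hq).2]) (q.isWalk.shift i)

lemma gdist_le_weightToHit (hπ : ∀ u v p, π u v = some p → p.vtx 0 = u ∧ p.vtx p.len = v)
    (a z : V) : gdist E a z ≤ weightToHit h π β a z :=
  le_iInf fun v => le_iInf fun q => le_iInf fun ⟨hq, _⟩ => le_iInf fun _ =>
    le_iInf fun ⟨hi, hqi⟩ => gdist_le_of_walk (hπ a v q hq).1 hqi (q.isWalk.of_le hi)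

lemma gdist_le_queryWeight (hπ : ∀ u v p, π u v = some p → p.vtx 0 = u ∧ p.vtx p.len = v)
    (a b : V) : gdist E a b ≤ queryWeight E h Y H π β a b := by
  refine le_inf (le_inf ?_ ?_) ?_ <;> split_ifs
  exacts [gdist_le_bdist h, le_top, gdist_le_weightFromHit hπ a b, le_top,
    gdist_le_weightToHit hπ a b, le_top]

lemma wdist_queryWeight_le_of_mem {a b : V} (hab : (a, b) ∈ Y) {k : ℕ} {p : ℕ → V} (hkh : k ≤ h)
    (h0 : p 0 = a) (hk : p k = b) (hp : IsWalk E k p) :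
    wdist (queryWeight E h Y H π β) a b ≤ k :=
  calc wdist (queryWeight E h Y H π β) a b ≤ queryWeight E h Y H π β a b := wdist_le_weight _ a b
    _ ≤ bdist E h a b := inf_le_left.trans (inf_le_left.trans (if_pos hab).le)
    _ ≤ k := bdist_le_of_walk hkh h0 hk hp

/-- A long path of `Π` is simulated in `X` by the two edges through its representative. -/
lemma wdist_queryWeight_le_len {u v : V} {q : Path E} (hq : π u v = some q) (hlen : h / 2 ≤ q.len)
    (hz : β u v ∈ H) {i : ℕ} (hi : i ≤ q.len) (hqi : q.vtx i = β u v) :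
    wdist (queryWeight E h Y H π β) u v ≤ q.len := by
  have hto : queryWeight E h Y H π β u (β u v) ≤ i := by
    refine inf_le_right.trans ?_
    rw [if_pos hz]
    exact iInf₂_le_of_le v q (iInf_le_of_le ⟨hq, hlen, rfl⟩ (iInf₂_le i ⟨hi, hqi⟩))
  have hfrom : queryWeight E h Y H π β (β u v) v ≤ (q.len - i : ℕ) := by
    refine inf_le_left.trans (inf_le_right.trans ?_)
    rw [if_pos hz]
    exact iInf₂_le_of_le u q (iInf_le_of_le ⟨hq, hlen, rfl⟩ (iInf₂_le i ⟨hi, hqi⟩))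
  calc wdist (queryWeight E h Y H π β) u v
      ≤ wdist (queryWeight E h Y H π β) u (β u v) + wdist (queryWeight E h Y H π β) (β u v) v :=
        wdist_triangle _ _ _ _
    _ ≤ i + (q.len - i : ℕ) := add_le_add ((wdist_le_weight _ _ _).trans hto)
        ((wdist_le_weight _ _ _).trans hfrom)
    _ = q.len := by rw [← Nat.cast_add, Nat.add_sub_cancel' hi]

end QueryGraph

section Correctness

variable {E : V → V → Prop} {h : ℕ} {C D H : Set V} {s : V} {Y : Set (V × V)}
  {π : V → V → Option (Path E)} {β : V → V → V}

/-- Steps of length at most `h` keep bounded distances applicable, steps of length at least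
`h / 2` are long enough to have a representative in `H`, and what remains is empty or again
at least `h / 2` long. -/
lemma exists_step_length (hh : 1 ≤ h) {k : ℕ} (hk : 1 ≤ k) :
    ∃ j, 1 ≤ j ∧ j ≤ k ∧ j ≤ h ∧ (h / 2 ≤ k → h / 2 ≤ j) ∧ (j = k ∨ h / 2 ≤ k - j) :=
  ⟨if k ≤ h then k else min h (k - h / 2), by split_ifs <;> omega⟩

lemma wdist_queryWeight_le_of_avoid
    (hπ : ∀ u v p, π u v = some p → p.vtx 0 = u ∧ p.vtx p.len = v)
    (hcov : ∀ u v : V, bdist (delV E (C ∪ D)) h u v ≠ ⊤ →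
      (u, v) ∈ Y ∨ ∃ p, π u v = some p ∧ (p.len : ℕ∞) ≤ bdist (delV E (C ∪ D)) h u v)
    (hβ : ∀ u v : V, ∀ p, π u v = some p → h / 2 ≤ p.len →
      β u v ∈ H ∧ ∃ i ≤ p.len, p.vtx i = β u v)
    {j : ℕ} {p : ℕ → V} (hp : IsWalk E j p) (hgeo : gdist E (p 0) (p j) = j) (hjh : j ≤ h)
    (hjlong : h / 2 ≤ j) (havoid : ∀ i ≤ j, p i ∉ C ∪ D) :
    wdist (queryWeight E h Y H π β) (p 0) (p j) ≤ j := by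
  have hbd : bdist (delV E (C ∪ D)) h (p 0) (p j) ≤ j :=
    bdist_le_of_walk hjh rfl rfl (hp.delV havoid)
  rcases hcov _ _ (ne_top_of_le_ne_top (ENat.natCast_ne_top j) hbd) with hY | ⟨q, hq, hql⟩
  · exact wdist_queryWeight_le_of_mem hY hjh rfl rfl hp
  have hjq : j ≤ q.len := by
    have hq0 := hπ _ _ q hq
    exact_mod_cast hgeo ▸ gdist_le_of_walk hq0.1 hq0.2 q.isWalk
  obtain ⟨hz, i, hi, hqi⟩ := hβ _ _ q hq (hjlong.trans hjq)
  exact (wdist_queryWeight_le_len hq (hjlong.trans hjq) hz hi hqi).trans (hql.trans hbd)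

lemma exists_step
    (hh : 1 ≤ h) (hY : ∀ u v : V, ((u ∈ C ∨ u ∈ D ∨ u = s) ∨ (v ∈ C ∨ v ∈ D)) → (u, v) ∈ Y)
    (hπ : ∀ u v p, π u v = some p → p.vtx 0 = u ∧ p.vtx p.len = v)
    (hcov : ∀ u v : V, bdist (delV E (C ∪ D)) h u v ≠ ⊤ →
      (u, v) ∈ Y ∨ ∃ p, π u v = some p ∧ (p.len : ℕ∞) ≤ bdist (delV E (C ∪ D)) h u v)
    (hβ : ∀ u v : V, ∀ p, π u v = some p → h / 2 ≤ p.len →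
      β u v ∈ H ∧ ∃ i ≤ p.len, p.vtx i = β u v)
    {k : ℕ} {p : ℕ → V} (hp : IsWalk E k p) (hgeo : gdist E (p 0) (p k) = k) (hk : 1 ≤ k)
    (hgood : (p 0 ∈ C ∨ p 0 ∈ D ∨ p 0 = s) ∨ h / 2 ≤ k) :
    ∃ j, 1 ≤ j ∧ j ≤ k ∧ wdist (queryWeight E h Y H π β) (p 0) (p j) ≤ j ∧
      (j = k ∨ (p j ∈ C ∨ p j ∈ D ∨ p j = s) ∨ h / 2 ≤ k - j) := by
  obtain ⟨j, hj1, hjk, hjh, hjlong, hrest⟩ := exists_step_length hh hk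
  by_cases hhit : ∃ i, 1 ≤ i ∧ i ≤ j ∧ (p i ∈ C ∨ p i ∈ D)
  · obtain ⟨i, hi1, hij, hiCD⟩ := hhit
    exact ⟨i, hi1, by omega, wdist_queryWeight_le_of_mem (hY _ _ (Or.inr hiCD)) (by omega)
      rfl rfl (hp.of_le (by omega)), by tauto⟩
  refine ⟨j, hj1, hjk, ?_, hrest.imp_right Or.inr⟩
  by_cases hspecial : p 0 ∈ C ∨ p 0 ∈ D ∨ p 0 = s
  · exact wdist_queryWeight_le_of_mem (hY _ _ (Or.inl hspecial)) hjh rfl rfl (hp.of_le hjk)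
  refine wdist_queryWeight_le_of_avoid hπ hcov hβ (hp.of_le hjk)
    (gdist_prefix_suffix hp hgeo hjk).1 hjh (hjlong (hgood.resolve_left hspecial)) ?_
  intro i hi hmem
  rcases Nat.eq_zero_or_pos i with rfl | hi1
  · exact hspecial (hmem.imp_right Or.inl)
  · exact hhit ⟨i, hi1, hi, hmem⟩

lemma wdist_queryWeight_le_gdist
    (hh : 1 ≤ h) (hY : ∀ u v : V, ((u ∈ C ∨ u ∈ D ∨ u = s) ∨ (v ∈ C ∨ v ∈ D)) → (u, v) ∈ Y)
    (hπ : ∀ u v p, π u v = some p → p.vtx 0 = u ∧ p.vtx p.len = v)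
    (hcov : ∀ u v : V, bdist (delV E (C ∪ D)) h u v ≠ ⊤ →
      (u, v) ∈ Y ∨ ∃ p, π u v = some p ∧ (p.len : ℕ∞) ≤ bdist (delV E (C ∪ D)) h u v)
    (hβ : ∀ u v : V, ∀ p, π u v = some p → h / 2 ≤ p.len →
      β u v ∈ H ∧ ∃ i ≤ p.len, p.vtx i = β u v)
    (k : ℕ) {a t : V} (hk : gdist E a t = k) (hgood : (a ∈ C ∨ a ∈ D ∨ a = s) ∨ h / 2 ≤ k) :
    wdist (queryWeight E h Y H π β) a t ≤ k := by
  induction k using Nat.strong_induction_on generalizing a t with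
  | _ k IH =>
  obtain ⟨p, rfl, rfl, hp⟩ := exists_walk_of_gdist_eq hk
  rcases Nat.eq_zero_or_pos k with rfl | hk1
  · simp [wdist_self]
  obtain ⟨j, hj1, hjk, hstep, hrest⟩ := exists_step hh hY hπ hcov hβ hp hk hk1 hgood
  have hrest' : wdist (queryWeight E h Y H π β) (p j) (p k) ≤ (k - j : ℕ) := by
    rcases hrest with rfl | hgood'
    · simp [wdist_self]
    · exact IH (k - j) (by omega) (gdist_prefix_suffix hp hk hjk).2 hgood'
  calc wdist (queryWeight E h Y H π β) (p 0) (p k)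
      ≤ wdist (queryWeight E h Y H π β) (p 0) (p j) +
        wdist (queryWeight E h Y H π β) (p j) (p k) := wdist_triangle _ _ _ _
    _ ≤ j + (k - j : ℕ) := add_le_add hstep hrest'
    _ = k := by rw [← Nat.cast_add, Nat.add_sub_cancel' hjk]

end Correctness

/-- **Lemma 5.4 (correctness of the single-source query procedure), self-contained form.**
Under the stated invariants on `Y`, `Π` (paths `π_{u,v}` avoiding `D`) and the hitting-set
representatives `β`, the auxiliary weighted graph `X` (with the three kinds of edges, parallel
edges merged by minimum weight) satisfies `δ_X(s,t) = δ_G(s,t)` for every `t`. -/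
theorem query_graph_correct {V : Type*} (E : V → V → Prop) (h : ℕ) (hh : 2 ≤ h)
    (C D H : Set V) (s : V) (Y : Set (V × V))
    (hY : ∀ u v : V, ((u ∈ C ∨ u ∈ D ∨ u = s) ∨ (v ∈ C ∨ v ∈ D)) → (u, v) ∈ Y)
    (π : V → V → Option (Path E)) (β : V → V → V)
    (hπ : ∀ u v : V, ∀ p, π u v = some p →
      p.vtx 0 = u ∧ p.vtx p.len = v ∧ ∀ i ≤ p.len, p.vtx i ∉ D)
    (hcov : ∀ u v : V, bdist (delV E (C ∪ D)) h u v ≠ ⊤ →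
      (u, v) ∈ Y ∨ ∃ p, π u v = some p ∧ (p.len : ℕ∞) ≤ bdist (delV E (C ∪ D)) h u v)
    (hβ : ∀ u v : V, ∀ p, π u v = some p → h / 2 ≤ p.len →
      β u v ∈ H ∧ ∃ i ≤ p.len, p.vtx i = β u v)
    (w : V → V → ℕ∞)
    (hw : ∀ a b : V, w a b =
      (if (a, b) ∈ Y then bdist E h a b else ⊤) ⊓
      (if a ∈ H then
        ⨅ (u : V) (p : Path E) (_ : π u b = some p ∧ h / 2 ≤ p.len ∧ β u b = a)
          (i : ℕ) (_ : i ≤ p.len ∧ p.vtx i = a), ((p.len - i : ℕ) : ℕ∞)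
       else ⊤) ⊓
      (if b ∈ H then
        ⨅ (v : V) (p : Path E) (_ : π a v = some p ∧ h / 2 ≤ p.len ∧ β a v = b)
          (i : ℕ) (_ : i ≤ p.len ∧ p.vtx i = b), ((i : ℕ) : ℕ∞)
       else ⊤)) :
    ∀ t : V, wdist w s t = gdist E s t := by
  have hwX : w = queryWeight E h Y H π β := funext₂ hw
  subst hwX
  have hends : ∀ u v p, π u v = some p → p.vtx 0 = u ∧ p.vtx p.len = v :=
    fun u v p hp => ⟨(hπ u v p hp).1, (hπ u v p hp).2.1⟩
  intro t
  refine le_antisymm ?_ (gdist_le_wdist (gdist_le_queryWeight hends) s t)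
  by_cases hst : gdist E s t = ⊤
  · exact hst ▸ le_top
  obtain ⟨n, hn⟩ := ENat.ne_top_iff_exists.1 hst
  exact hn ▸ wdist_queryWeight_le_gdist (by omega) hY hends hcov hβ n hn.symm
    (Or.inl (Or.inr (Or.inr rfl)))

end Paper
end

section
/- For every directed graph G = (V,E) with |V| = n there exists a subgraph G' = (V,E') with E' ⊆ E and |E'| ≤ 2n such that for all u,v ∈ V, the vertices u and v are strongly connected in G' if and only if they are strongly connected in G; equivalently, G' has exactly the same strongly connected components as G. -/
/-!
In each strongly connected component fix a root `r`. Every other vertex `v` of the component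
keeps two edges: the last edge of a shortest walk from `r` to `v` and the first edge of a
shortest walk from `v` to `r`. Following the first kind backwards strictly decreases the distance
from `r`, so these edges form an out-tree rooted at `r`; the second kind is the same construction
in the reversed graph, an in-tree rooted at `r`. Hence every vertex still reaches its root and is
reached from it, with at most two edges kept per vertex.
-/

open scoped Classical

namespace Paper

variable {V : Type*}

/-- `v` is reachable from `u` (length-0 walks allowed). -/
def Reach (E : V → V → Prop) (u v : V) : Prop :=
  ∃ (k : ℕ) (p : ℕ → V), p 0 = u ∧ p k = v ∧ IsWalk E k p

section SparseSubgraph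

variable {E : V → V → Prop}

theorem reach_iff_reflTransGen {u v : V} : Reach E u v ↔ Relation.ReflTransGen E u v := by
  constructor
  · rintro ⟨k, p, rfl, rfl, hp⟩
    induction k with
    | zero => rfl
    | succ k ih => exact (ih fun i hi => hp i (by omega)).tail (hp k (by omega))
  · intro h
    induction h with
    | refl => exact ⟨0, fun _ => u, rfl, rfl, fun i hi => absurd hi (Nat.not_lt_zero i)⟩
    | @tail b c _ hbc ih =>
      obtain ⟨k, p, hp0, hpk, hp⟩ := ih
      refine ⟨k + 1, fun i => if i ≤ k then p i else c, by simpa using hp0, by simp, ?_⟩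
      intro i hi
      rcases Nat.lt_or_eq_of_le (Nat.le_of_lt_succ hi) with hik | rfl
      · simpa [hik.le, Nat.succ_le_of_lt hik] using hp i hik
      · simpa [hpk] using hbc

theorem reach_flip {u v : V} : Reach (flip E) u v ↔ Reach E v u := by
  rw [reach_iff_reflTransGen, reach_iff_reflTransGen]
  exact Relation.reflTransGen_swap

theorem Reach.trans {u v w : V} (huv : Reach E u v) (hvw : Reach E v w) : Reach E u w :=
  reach_iff_reflTransGen.2
    ((reach_iff_reflTransGen.1 huv).trans (reach_iff_reflTransGen.1 hvw))

theorem Reach.mono {E' : V → V → Prop} (hE : ∀ u v, E' u v → E u v) {u v : V}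
    (h : Reach E' u v) : Reach E u v :=
  reach_iff_reflTransGen.2 (Relation.ReflTransGen.mono hE _ _ (reach_iff_reflTransGen.1 h))

def StronglyConnected (E : V → V → Prop) (u v : V) : Prop :=
  Reach E u v ∧ Reach E v u

theorem StronglyConnected.refl (u : V) : StronglyConnected E u u :=
  ⟨reach_iff_reflTransGen.2 .refl, reach_iff_reflTransGen.2 .refl⟩

theorem StronglyConnected.symm {u v : V} (h : StronglyConnected E u v) :
    StronglyConnected E v u :=
  ⟨h.2, h.1⟩

theorem StronglyConnected.trans {u v w : V} (huv : StronglyConnected E u v)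
    (hvw : StronglyConnected E v w) : StronglyConnected E u w :=
  ⟨huv.1.trans hvw.1, hvw.2.trans huv.2⟩

theorem stronglyConnected_flip {u v : V} :
    StronglyConnected (flip E) u v ↔ StronglyConnected E u v := by
  simp only [StronglyConnected, reach_flip, and_comm]

/-- Length of a shortest walk from `u` to `v`; `0` when `v` is not reachable from `u`. -/
noncomputable def walkDist (E : V → V → Prop) (u v : V) : ℕ :=
  sInf {k | ∃ p : ℕ → V, p 0 = u ∧ p k = v ∧ IsWalk E k p}

theorem exists_pred_of_reach {r v : V} (h : Reach E r v) (hv : v ≠ r) :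
    ∃ w, E w v ∧ Reach E r w ∧ walkDist E r w < walkDist E r v := by
  set d := walkDist E r v
  obtain ⟨p, hp0, hpd, hp⟩ : ∃ p : ℕ → V, p 0 = r ∧ p d = v ∧ IsWalk E d p :=
    Nat.sInf_mem h
  have hd : d ≠ 0 := fun h0 => hv (by rw [← hpd, h0, hp0])
  have hprefix : IsWalk E (d - 1) p := fun i hi => hp i (by omega)
  refine ⟨p (d - 1), ?_, ⟨d - 1, p, hp0, rfl, hprefix⟩, ?_⟩
  · simpa [Nat.sub_add_cancel (Nat.pos_of_ne_zero hd), hpd] using hp (d - 1) (by omega)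
  · have hle : walkDist E r (p (d - 1)) ≤ d - 1 := Nat.sInf_le ⟨p, hp0, rfl, hprefix⟩
    omega

noncomputable def parent (E : V → V → Prop) (r v : V) : V :=
  haveI : Nonempty V := ⟨v⟩
  Classical.epsilon fun w => E w v ∧ Reach E r w ∧ walkDist E r w < walkDist E r v

theorem parent_spec {r v : V} (h : StronglyConnected E r v) (hv : v ≠ r) :
    E (parent E r v) v ∧ StronglyConnected E r (parent E r v) ∧
      walkDist E r (parent E r v) < walkDist E r v := by
  obtain ⟨hE, hr, hlt⟩ := Classical.epsilon_spec (exists_pred_of_reach h.1 hv)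
  exact ⟨hE, ⟨hr, (reach_iff_reflTransGen.2 (.single hE)).trans h.2⟩, hlt⟩

def IsParentEdge (E : V → V → Prop) (r a b : V) : Prop :=
  StronglyConnected E r b ∧ b ≠ r ∧ a = parent E r b

theorem reflTransGen_isParentEdge {r v : V} (h : StronglyConnected E r v) :
    Relation.ReflTransGen (IsParentEdge E r) r v := by
  induction hd : walkDist E r v using Nat.strong_induction_on generalizing v with
  | _ d ih =>
    by_cases hv : v = r
    · rw [hv]
    · obtain ⟨-, hpar, hlt⟩ := parent_spec h hv
      exact (ih _ (hd ▸ hlt) hpar rfl).tail ⟨h, hv, rfl⟩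

noncomputable def root (E : V → V → Prop) (v : V) : V :=
  haveI : Nonempty V := ⟨v⟩
  Classical.epsilon (StronglyConnected E v)

theorem stronglyConnected_root (v : V) : StronglyConnected E (root E v) v :=
  (Classical.epsilon_spec ⟨v, StronglyConnected.refl v⟩).symm

theorem root_eq_root {u v : V} (h : StronglyConnected E u v) : root E u = root E v := by
  have : StronglyConnected E u = StronglyConnected E v :=
    funext fun w => propext ⟨h.symm.trans, h.trans⟩
  rw [root, this, ← root]

def sparsifier (E : V → V → Prop) (a b : V) : Prop :=
  (b ≠ root E b ∧ a = parent E (root E b) b) ∨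
    (a ≠ root E a ∧ b = parent (flip E) (root E a) a)

theorem sparsifier_le {a b : V} (h : sparsifier E a b) : E a b := by
  rcases h with ⟨hb, rfl⟩ | ⟨ha, rfl⟩
  · exact (parent_spec (stronglyConnected_root b) hb).1
  · exact (parent_spec (stronglyConnected_flip.2 (stronglyConnected_root a)) ha).1

theorem ncard_sparsifier_le [Finite V] :
    {q : V × V | sparsifier E q.1 q.2}.ncard ≤ 2 * Nat.card V := by
  have hsub : {q : V × V | sparsifier E q.1 q.2} ⊆
      Set.range (fun b => (parent E (root E b) b, b)) ∪
        Set.range (fun a => (a, parent (flip E) (root E a) a)) := by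
    rintro ⟨a, b⟩ (⟨-, h⟩ | ⟨-, h⟩)
    · exact Or.inl ⟨b, Prod.ext h.symm rfl⟩
    · exact Or.inr ⟨a, Prod.ext rfl h.symm⟩
  calc {q : V × V | sparsifier E q.1 q.2}.ncard
      ≤ (Set.range fun b => (parent E (root E b) b, b)).ncard +
          (Set.range fun a => (a, parent (flip E) (root E a) a)).ncard :=
        (Set.ncard_le_ncard hsub).trans (Set.ncard_union_le _ _)
    _ ≤ Nat.card V + Nat.card V := by
        rw [← Nat.card_coe_set_eq, ← Nat.card_coe_set_eq]
        exact add_le_add (Finite.card_range_le _) (Finite.card_range_le _)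
    _ = 2 * Nat.card V := (two_mul _).symm

theorem reach_sparsifier_from_root (v : V) : Reach (sparsifier E) (root E v) v := by
  refine reach_iff_reflTransGen.2
    (Relation.ReflTransGen.mono ?_ _ _ (reflTransGen_isParentEdge (stronglyConnected_root v)))
  rintro a b ⟨hb, hne, rfl⟩
  have hroot : root E b = root E v := by
    rw [← root_eq_root hb, root_eq_root (stronglyConnected_root v)]
  exact Or.inl ⟨hroot ▸ hne, by rw [hroot]⟩

theorem reach_sparsifier_to_root (v : V) : Reach (sparsifier E) v (root E v) := by
  have htree := reflTransGen_isParentEdge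
    (stronglyConnected_flip.2 (stronglyConnected_root (E := E) v))
  refine reach_flip.1 (reach_iff_reflTransGen.2 (Relation.ReflTransGen.mono ?_ _ _ htree))
  rintro a b ⟨hb, hne, rfl⟩
  have hroot : root E b = root E v := by
    rw [← root_eq_root (stronglyConnected_flip.1 hb),
      root_eq_root (stronglyConnected_root v)]
  exact Or.inr ⟨hroot ▸ hne, by rw [hroot]⟩

theorem stronglyConnected_sparsifier_iff {u v : V} :
    StronglyConnected (sparsifier E) u v ↔ StronglyConnected E u v := by
  refine ⟨fun h => ⟨h.1.mono fun _ _ => sparsifier_le, h.2.mono fun _ _ => sparsifier_le⟩,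
    fun h => ?_⟩
  have hroot := root_eq_root h
  exact ⟨reach_sparsifier_to_root u |>.trans (hroot ▸ reach_sparsifier_from_root v),
    reach_sparsifier_to_root v |>.trans (hroot ▸ reach_sparsifier_from_root u)⟩

end SparseSubgraph

/-- **Lemma 6.6.** Every digraph `G` on `n` vertices has a subgraph `G'` with at most `2n`
edges that has exactly the same strongly connected components (i.e., two vertices are
strongly connected in `G'` iff they are strongly connected in `G`). -/
theorem scc_sparsifier {V : Type*} [Fintype V]
    (E : V → V → Prop) (n : ℕ) (hn : Fintype.card V = n) :
    ∃ E' : V → V → Prop,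
      (∀ u v : V, E' u v → E u v) ∧
      ({q : V × V | E' q.1 q.2}).ncard ≤ 2 * n ∧
      (∀ u v : V, (Reach E' u v ∧ Reach E' v u) ↔ (Reach E u v ∧ Reach E v u)) :=
  ⟨sparsifier E, fun _ _ => sparsifier_le,
    by rw [← hn, ← Nat.card_eq_fintype_card]; exact ncard_sparsifier_le,
    fun _ _ => stronglyConnected_sparsifier_iff⟩

end Paper
end

section
/- Let G = (V,E) be a directed graph and W ⊆ V. Define the directed graph G_W on the vertex set consisting of two disjoint copies V⁺ = {v⁺ : v ∈ V} and V⁻ = {v⁻ : v ∈ V} of V, with edge set {(v⁺, v⁻) : v ∈ W} ∪ {(u⁻, v⁺) : (u,v) ∈ E}. Then: (1) every walk in G_W between two vertices of V⁺ has even length; (2) for all s,t ∈ V and k ≥ 0, the walks of length 2k from s⁺ to t⁺ in G_W are in bijection with the walks v_0 = s, v_1, …, v_k = t of length k in G satisfying v_0, …, v_{k−1} ∈ W; (3) consequently, for all s,t ∈ W and every integer h ≥ 0, δ_{G[W]}^h(s,t) < ∞ if and only if δ_{G_W}^{2h}(s⁺,t⁺) < ∞, and in that case δ_{G_W}^{2h}(s⁺,t⁺)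 = 2·δ_{G[W]}^h(s,t). -/
/-!
A walk of `G_W` that starts in `V⁺` alternates between `V⁺` and `V⁻`, and its steps `v⁺ → v⁻`
keep the vertex and require `v ∈ W`. So it is determined by its even positions, which form a walk
of `G` of half the length whose vertices, except possibly the last, lie in `W`;
conversely, interleaving `v⁺ v⁻` lifts such a walk back. When the target `t` lies in `W` these are
exactly the walks of `G[W]`, so the admissible lengths for `G_W` with budget `2h` are the doubles
of those for `G[W]` with budget `h`, and bounded distances double.
-/

open scoped Classical

namespace Paper

variable {V : Type*}

/-- The induced subgraph `G[W]`. -/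
def induce (E : V → V → Prop) (W : Set V) : V → V → Prop :=
  fun u v => E u v ∧ u ∈ W ∧ v ∈ W

/-- The split graph `G_W` on two copies of `V`: `Sum.inl v = v⁺`, `Sum.inr v = v⁻`;
edges `v⁺ → v⁻` for `v ∈ W` and `u⁻ → v⁺` for `(u,v) ∈ E`. -/
def splitW (E : V → V → Prop) (W : Set V) : (V ⊕ V) → (V ⊕ V) → Prop :=
  fun a b =>
    match a, b with
    | Sum.inl u, Sum.inr v => u = v ∧ u ∈ W
    | Sum.inr u, Sum.inl v => E u v
    | _, _ => False

section Walks

variable {A : Type*}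

def HasWalk (R : A → A → Prop) (k : ℕ) (a b : A) : Prop :=
  ∃ p : ℕ → A, p 0 = a ∧ p k = b ∧ IsWalk R k p

theorem bdist_eq_iInf_hasWalk (R : A → A → Prop) (h : ℕ) (a b : A) :
    bdist R h a b = ⨅ (k : ℕ) (_ : k ≤ h ∧ HasWalk R k a b), (k : ℕ∞) :=
  rfl

theorem IsWalk.congr {R : A → A → Prop} {k : ℕ} {p p' : ℕ → A} (hp : IsWalk R k p)
    (h : ∀ j ≤ k, p j = p' j) : IsWalk R k p' := fun i hi => by
  rw [← h i hi.le, ← h (i + 1) hi]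
  exact hp i hi

theorem isWalk_iff_of_eq {R : A → A → Prop} {n : ℕ} {p : ℕ → A} {q : Fin (n + 1) → A}
    (h : ∀ i : Fin (n + 1), p i = q i) :
    IsWalk R n p ↔ ∀ i : Fin n, R (q i.castSucc) (q i.succ) := by
  refine ⟨fun hp i => ?_, fun hq i hi => ?_⟩
  · rw [← h, ← h, Fin.val_castSucc, Fin.val_succ]
    exact hp i i.2
  · simpa [← h] using hq ⟨i, hi⟩

/-- Indices beyond `n` wrap around modulo `n + 1`; only the values at `j ≤ n` are ever used. -/
def natExtend {n : ℕ} (q : Fin (n + 1) → A) : ℕ → A := fun j => q (Fin.ofNat (n + 1) j)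

theorem natExtend_apply_of_lt {n j : ℕ} (q : Fin (n + 1) → A) (hj : j < n + 1) :
    natExtend q j = q ⟨j, hj⟩ :=
  congrArg q (Fin.ext (Nat.mod_eq_of_lt hj))

@[simp]
theorem natExtend_val {n : ℕ} (q : Fin (n + 1) → A) (i : Fin (n + 1)) : natExtend q i = q i :=
  congrArg q (Fin.ofNat_val_eq_self i)

@[simp]
theorem natExtend_zero {n : ℕ} (q : Fin (n + 1) → A) : natExtend q 0 = q 0 :=
  natExtend_val q 0

@[simp]
theorem natExtend_self {n : ℕ} (q : Fin (n + 1) → A) : natExtend q n = q (Fin.last n) :=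
  natExtend_val q (Fin.last n)

theorem isWalk_natExtend_iff {R : A → A → Prop} {n : ℕ} {q : Fin (n + 1) → A} :
    IsWalk R n (natExtend q) ↔ ∀ i : Fin n, R (q i.castSucc) (q i.succ) :=
  isWalk_iff_of_eq (natExtend_val q)

end Walks

theorem isWalk_induce_iff {E : V → V → Prop} {W : Set V} {k : ℕ} {q : ℕ → V} (hk : q k ∈ W) :
    IsWalk (induce E W) k q ↔ IsWalk E k q ∧ ∀ i < k, q i ∈ W := by
  refine ⟨fun hq => ⟨fun i hi => (hq i hi).1, fun i hi => (hq i hi).2.1⟩,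
    fun ⟨hq, hW⟩ i hi => ⟨hq i hi, hW i hi, ?_⟩⟩
  rcases (Nat.succ_le_of_lt hi).lt_or_eq with h | h
  · exact hW _ h
  · rw [← h] at hk
    exact hk

theorem forall_lt_two_mul_iff {P : ℕ → Prop} {k : ℕ} :
    (∀ j < 2 * k, P j) ↔ ∀ i < k, P (2 * i) ∧ P (2 * i + 1) := by
  refine ⟨fun h i hi => ⟨h _ (by omega), h _ (by omega)⟩, fun h j hj => ?_⟩
  obtain ⟨i, rfl | rfl⟩ := Nat.even_or_odd' j
  · exact (h i (by omega)).1
  · exact (h i (by omega)).2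

section Split

variable {E : V → V → Prop} {W : Set V}

@[simp]
theorem splitW_inl_iff {u : V} {b : V ⊕ V} :
    splitW E W (Sum.inl u) b ↔ b = Sum.inr u ∧ u ∈ W := by
  cases b <;> simp [splitW, eq_comm]

@[simp]
theorem splitW_inr_iff {u : V} {b : V ⊕ V} :
    splitW E W (Sum.inr u) b ↔ ∃ v, b = Sum.inl v ∧ E u v := by
  cases b <;> simp [splitW]

/-- The walk `v₀⁺ v₀⁻ v₁⁺ v₁⁻ …` of `G_W` traced by a walk `v₀ v₁ …` of `G`. -/
def splitWalk (q : ℕ → V) : ℕ → V ⊕ V := fun j =>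
  if Even j then Sum.inl (q (j / 2)) else Sum.inr (q (j / 2))

def unsplitWalk (p : ℕ → V ⊕ V) : ℕ → V := fun i => Sum.elim id id (p (2 * i))

@[simp]
theorem splitWalk_two_mul (q : ℕ → V) (i : ℕ) : splitWalk q (2 * i) = Sum.inl (q i) := by
  simp [splitWalk]

@[simp]
theorem splitWalk_two_mul_add_one (q : ℕ → V) (i : ℕ) :
    splitWalk q (2 * i + 1) = Sum.inr (q i) := by
  simp [splitWalk, Nat.add_div_of_dvd_right]

theorem splitWalk_congr {q q' : ℕ → V} {j : ℕ} (h : q (j / 2) = q' (j / 2)) :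
    splitWalk q j = splitWalk q' j := by
  simp only [splitWalk, h]

theorem isWalk_splitWalk_iff {k : ℕ} {q : ℕ → V} :
    IsWalk (splitW E W) (2 * k) (splitWalk q) ↔ IsWalk E k q ∧ ∀ i < k, q i ∈ W := by
  simp only [IsWalk, forall_lt_two_mul_iff, show ∀ i, 2 * i + 1 + 1 = 2 * (i + 1) from fun _ => rfl,
    splitWalk_two_mul, splitWalk_two_mul_add_one, splitW_inl_iff, splitW_inr_iff, true_and,
    Sum.inl.injEq, exists_eq_left', imp_and, forall_and]
  exact and_comm

theorem eq_splitWalk_unsplitWalk {m : ℕ} {p : ℕ → V ⊕ V} {s : V} (h0 : p 0 = Sum.inl s)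
    (hp : IsWalk (splitW E W) m p) : ∀ j ≤ m, p j = splitWalk (unsplitWalk p) j := by
  intro j hj
  induction j with
  | zero => simp [splitWalk, unsplitWalk, h0]
  | succ j ih =>
    have hstep := hp j hj
    rw [ih (by omega)] at hstep
    obtain ⟨i, rfl | rfl⟩ := Nat.even_or_odd' j
    · rw [splitWalk_two_mul, splitW_inl_iff] at hstep
      rw [hstep.1, splitWalk_two_mul_add_one]
    · rw [splitWalk_two_mul_add_one, splitW_inr_iff] at hstep
      obtain ⟨v, hv, -⟩ := hstep
      simp only [show 2 * i + 1 + 1 = 2 * (i + 1) from rfl, splitWalk_two_mul, unsplitWalk] at hv ⊢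
      rw [hv]
      rfl

theorem isWalk_unsplitWalk {k : ℕ} {p : ℕ → V ⊕ V} {s : V} (h0 : p 0 = Sum.inl s)
    (hp : IsWalk (splitW E W) (2 * k) p) :
    IsWalk E k (unsplitWalk p) ∧ ∀ i < k, unsplitWalk p i ∈ W :=
  isWalk_splitWalk_iff.mp (hp.congr (eq_splitWalk_unsplitWalk h0 hp))

theorem even_of_isWalk_splitW {k : ℕ} {p : ℕ → V ⊕ V} {s t : V} (h0 : p 0 = Sum.inl s)
    (hk : p k = Sum.inl t) (hp : IsWalk (splitW E W) k p) : Even k := by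
  obtain ⟨i, rfl | rfl⟩ := Nat.even_or_odd' k
  · exact even_two_mul i
  · rw [eq_splitWalk_unsplitWalk h0 hp _ le_rfl, splitWalk_two_mul_add_one] at hk
    exact absurd hk Sum.inr_ne_inl

theorem hasWalk_splitW_iff {m : ℕ} {s t : V} (ht : t ∈ W) :
    HasWalk (splitW E W) m (Sum.inl s) (Sum.inl t) ↔
      ∃ k, m = 2 * k ∧ HasWalk (induce E W) k s t := by
  constructor
  · rintro ⟨p, h0, hm, hp⟩
    obtain ⟨k, rfl⟩ := (even_of_isWalk_splitW h0 hm hp).two_dvd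
    have hq0 : unsplitWalk p 0 = s := by simp [unsplitWalk, h0]
    have hqk : unsplitWalk p k = t := by simp [unsplitWalk, hm]
    refine ⟨k, rfl, unsplitWalk p, hq0, hqk, ?_⟩
    exact (isWalk_induce_iff (hqk ▸ ht)).mpr (isWalk_unsplitWalk h0 hp)
  · rintro ⟨k, rfl, q, rfl, rfl, hq⟩
    exact ⟨splitWalk q, splitWalk_two_mul q 0, splitWalk_two_mul q k,
      isWalk_splitWalk_iff.mpr ((isWalk_induce_iff ht).mp hq)⟩

theorem bdist_splitW (h : ℕ) {s t : V} (ht : t ∈ W) :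
    bdist (splitW E W) (2 * h) (Sum.inl s) (Sum.inl t) = 2 * bdist (induce E W) h s t := by
  have hlen : ∀ m, (m ≤ 2 * h ∧ HasWalk (splitW E W) m (Sum.inl s) (Sum.inl t)) ↔
      ∃ k, m = 2 * k ∧ k ≤ h ∧ HasWalk (induce E W) k s t := by
    intro m
    rw [hasWalk_splitW_iff ht]
    constructor
    · rintro ⟨hm, k, rfl, hk⟩
      exact ⟨k, rfl, by omega, hk⟩
    · rintro ⟨k, rfl, hk, hw⟩
      exact ⟨by omega, k, rfl, hw⟩
  simp only [bdist_eq_iInf_hasWalk, hlen, iInf_exists, ENat.mul_iInf_of_ne two_ne_zero]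
  rw [iInf_comm]
  simp only [iInf_and, iInf_iInf_eq_left, Nat.cast_mul, Nat.cast_ofNat]

end Split

def splitWalkEquiv (E : V → V → Prop) (W : Set V) (k : ℕ) (s t : V) :
    {p : Fin (2 * k + 1) → V ⊕ V //
      p 0 = Sum.inl s ∧ p (Fin.last (2 * k)) = Sum.inl t ∧
      ∀ i : Fin (2 * k), splitW E W (p i.castSucc) (p i.succ)} ≃
    {q : Fin (k + 1) → V //
      q 0 = s ∧ q (Fin.last k) = t ∧
      (∀ i : Fin k, E (q i.castSucc) (q i.succ)) ∧
      ∀ i : Fin (k + 1), (i : ℕ) < k → q i ∈ W} where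
  toFun p :=
    have hP0 : natExtend p.1 0 = Sum.inl s := by simpa using p.2.1
    have hq := isWalk_unsplitWalk hP0 (isWalk_natExtend_iff.mpr p.2.2.2)
    ⟨fun i => unsplitWalk (natExtend p.1) i, by simp [unsplitWalk, p.2.1],
      by simp [unsplitWalk, p.2.2.1],
      (isWalk_iff_of_eq fun _ => rfl).mp hq.1, fun i hi => hq.2 i hi⟩
  invFun q :=
    have hq : IsWalk E k (natExtend q.1) ∧ ∀ i < k, natExtend q.1 i ∈ W :=
      ⟨isWalk_natExtend_iff.mpr q.2.2.2.1,
        fun i hi => by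
          rw [natExtend_apply_of_lt q.1 (by omega : i < k + 1)]
          exact q.2.2.2.2 ⟨i, by omega⟩ hi⟩
    ⟨fun j => splitWalk (natExtend q.1) j, by simp [splitWalk, q.2.1],
      by simp [splitWalk, q.2.2.1],
      (isWalk_iff_of_eq fun _ => rfl).mp (isWalk_splitWalk_iff.mpr hq)⟩
  left_inv p := by
    have hP0 : natExtend p.1 0 = Sum.inl s := by simpa using p.2.1
    have hPw := isWalk_natExtend_iff.mpr p.2.2.2
    ext j : 2
    calc splitWalk (natExtend fun i => unsplitWalk (natExtend p.1) i) j
        = splitWalk (unsplitWalk (natExtend p.1)) j :=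
          splitWalk_congr (natExtend_apply_of_lt _ (by omega))
      _ = natExtend p.1 j := (eq_splitWalk_unsplitWalk hP0 hPw j (by omega)).symm
      _ = p.1 j := natExtend_val p.1 j
  right_inv q := by
    ext i : 2
    simp [unsplitWalk, natExtend_apply_of_lt _ (show 2 * (i : ℕ) < 2 * k + 1 by omega)]

/-- **Lemma 4.6 (vertex splitting).** (1) Every walk of `G_W` between two vertices of `V⁺` has
even length; (2) walks of length `2k` from `s⁺` to `t⁺` in `G_W` are in bijection with walks
`v_0 = s, …, v_k = t` of length `k` in `G` with `v_0, …, v_{k−1} ∈ W`; (3) hence for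
`s, t ∈ W` and any `h ≥ 0`, `δ_{G[W]}^h(s,t) < ∞` iff `δ_{G_W}^{2h}(s⁺,t⁺) < ∞`, and then
`δ_{G_W}^{2h}(s⁺,t⁺) = 2·δ_{G[W]}^h(s,t)`. -/
theorem vertex_splitting {V : Type*} (E : V → V → Prop) (W : Set V) :
    (∀ (k : ℕ) (p : ℕ → V ⊕ V) (s t : V),
        p 0 = Sum.inl s → p k = Sum.inl t → IsWalk (splitW E W) k p → Even k) ∧
    (∀ (k : ℕ) (s t : V),
      Nonempty
        ({p : Fin (2 * k + 1) → V ⊕ V //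
            p 0 = Sum.inl s ∧ p (Fin.last (2 * k)) = Sum.inl t ∧
            ∀ i : Fin (2 * k), splitW E W (p i.castSucc) (p i.succ)} ≃
         {q : Fin (k + 1) → V //
            q 0 = s ∧ q (Fin.last k) = t ∧
            (∀ i : Fin k, E (q i.castSucc) (q i.succ)) ∧
            ∀ i : Fin (k + 1), (i : ℕ) < k → q i ∈ W})) ∧
    (∀ (h : ℕ) (s t : V), s ∈ W → t ∈ W →
      (bdist (induce E W) h s t ≠ ⊤ ↔
        bdist (splitW E W) (2 * h) (Sum.inl s) (Sum.inl t) ≠ ⊤) ∧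
      (bdist (induce E W) h s t ≠ ⊤ →
        bdist (splitW E W) (2 * h) (Sum.inl s) (Sum.inl t)
          = 2 * bdist (induce E W) h s t)) := by
  refine ⟨fun k p s t => even_of_isWalk_splitW, fun k s t => ⟨splitWalkEquiv E W k s t⟩,
    fun h s t _ ht => ?_⟩
  rw [bdist_splitW h ht]
  exact ⟨⟨WithTop.mul_ne_top (by decide), fun hne hx => hne (hx ▸ ENat.mul_top two_ne_zero)⟩,
    fun _ => rfl⟩

end Paper
end

section
/- Let k ≥ 1, let a₁, …, a_k be positive integers with a₁ + ⋯ + a_k = n, and let d ≥ 1 be an integer. Then there exists a partition of {1, …, k} into m nonempty intervals of consecutive indices I₁, …, I_m (appearing in order) such that every interval I_j either consists of a single index or satisfies ∑_{i ∈ I_j} a_i ≤ d, and m ≤ 2n/d + 1. -/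
/-!
Greedy blocks: starting at `s`, take the longest admissible block `[s, e)` (a single index, or
weight at most `d`), then the singleton `[e, e + 1)`, and recurse from `e + 1`. Maximality of `e`
means the block and the singleton together weigh more than `d`, so every pair of blocks pays
for itself with weight `d`, and `m * d ≤ 2 n + d`.
-/

open Finset

section BlockPartition

variable (a : ℕ → ℕ) (d : ℕ)

def IsBlock (s t : ℕ) : Prop :=
  t = s + 1 ∨ ∑ i ∈ Ico s t, a i ≤ d

def IsBlockPartition (s k m : ℕ) (b : ℕ → ℕ) : Prop :=
  b 0 = s ∧ b m = k ∧ ∀ j < m, b j < b (j + 1) ∧ IsBlock a d (b j) (b (j + 1))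

theorem isBlockPartition_self (k : ℕ) : IsBlockPartition a d k k 0 fun _ => k :=
  ⟨rfl, rfl, by simp⟩

variable {a d}

theorem IsBlockPartition.cons {s t k m : ℕ} {b : ℕ → ℕ} (hb : IsBlockPartition a d t k m b)
    (hst : s < t) (hblock : IsBlock a d s t) :
    IsBlockPartition a d s k (m + 1) fun | 0 => s | j + 1 => b j := by
  obtain ⟨hb0, hbm, hbj⟩ := hb
  refine ⟨rfl, hbm, ?_⟩
  rintro (_ | j) hj
  · subst hb0
    exact ⟨hst, hblock⟩
  · exact hbj j (by omega)

theorem exists_maximal_isBlock {s k : ℕ} (hsk : s < k) :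
    ∃ e, s < e ∧ e ≤ k ∧ IsBlock a d s e ∧
      (e < k → d < ∑ i ∈ Ico s (e + 1), a i) := by
  classical
  have hfirst : IsBlock a d s (s + 1) := Or.inl rfl
  refine ⟨Nat.findGreatest (IsBlock a d s) k, ?_, Nat.findGreatest_le k,
    Nat.findGreatest_spec hsk hfirst, fun he => ?_⟩
  · exact Nat.lt_of_succ_le (Nat.le_findGreatest hsk hfirst)
  · have hnext := Nat.findGreatest_is_greatest (Nat.lt_succ_self _) he
    simp only [IsBlock, not_or, not_le] at hnext
    exact hnext.2

theorem exists_isBlockPartition_mul_le (s k : ℕ) (hsk : s ≤ k) :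
    ∃ m b, IsBlockPartition a d s k m b ∧ m * d ≤ 2 * ∑ i ∈ Ico s k, a i + d := by
  rcases hsk.eq_or_lt with rfl | hsk
  · exact ⟨0, _, isBlockPartition_self a d s, by simp⟩
  obtain ⟨e, hse, hek, hblock, hheavy⟩ := exists_maximal_isBlock (a := a) (d := d) hsk
  rcases hek.eq_or_lt with rfl | hek
  · exact ⟨1, _, (isBlockPartition_self a d e).cons hse hblock, by simp⟩
  obtain ⟨m, b, hb, hbound⟩ := exists_isBlockPartition_mul_le (e + 1) k hek
  refine ⟨m + 2, _, (hb.cons (Nat.lt_succ_self e) (Or.inl rfl)).cons hse hblock, ?_⟩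
  have hsplit := sum_Ico_consecutive a (hse.trans (Nat.lt_succ_self e)).le hek
  have hpair := hheavy hek
  rw [← hsplit]
  linarith
termination_by k - s

end BlockPartition

theorem block_partition_general (k n d : ℕ) (hd : 1 ≤ d)
    (a : ℕ → ℕ)
    (hsum : ∑ i ∈ Finset.range k, a i = n) :
    ∃ (m : ℕ) (b : ℕ → ℕ),
      b 0 = 0 ∧ b m = k ∧
      (∀ j < m, b j < b (j + 1)) ∧
      (∀ j < m, b (j + 1) = b j + 1 ∨ ∑ i ∈ Finset.Ico (b j) (b (j + 1)), a i ≤ d) ∧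
      (m : ℝ) ≤ 2 * (n : ℝ) / (d : ℝ) + 1 := by
  obtain ⟨m, b, ⟨hb0, hbm, hblocks⟩, hbound⟩ :=
    exists_isBlockPartition_mul_le (a := a) (d := d) 0 k k.zero_le
  rw [← range_eq_Ico, hsum] at hbound
  refine ⟨m, b, hb0, hbm, fun j hj => (hblocks j hj).1, fun j hj => (hblocks j hj).2, ?_⟩
  have hd0 : (0 : ℝ) < d := by exact_mod_cast hd
  rw [show 2 * (n : ℝ) / d + 1 = (2 * n + d) / d by field_simp, le_div_iff₀ hd0]
  exact_mod_cast hbound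

/-- **Block partition (Section 7).** Given positive integers `a 0, …, a (k−1)` summing to `n`
and `d ≥ 1`, there is a partition of `{0,…,k−1}` into `m` consecutive nonempty intervals
`[b j, b (j+1))` (given by breakpoints `0 = b 0 < b 1 < ⋯ < b m = k`) such that every
interval is a single index or has weight at most `d`, and `m ≤ 2n/d + 1`. -/
theorem block_partition (k n d : ℕ) (hk : 1 ≤ k) (hd : 1 ≤ d)
    (a : ℕ → ℕ) (hpos : ∀ i < k, 1 ≤ a i)
    (hsum : ∑ i ∈ Finset.range k, a i = n) :
    ∃ (m : ℕ) (b : ℕ → ℕ),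
      b 0 = 0 ∧ b m = k ∧
      (∀ j < m, b j < b (j + 1)) ∧
      (∀ j < m, b (j + 1) = b j + 1 ∨ ∑ i ∈ Finset.Ico (b j) (b (j + 1)), a i ≤ d) ∧
      (m : ℝ) ≤ 2 * (n : ℝ) / (d : ℝ) + 1 :=
  block_partition_general k n d hd a hsum
end
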